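/- Let G = (V, E) be a finite simple graph and let K ⊆ D ⊆ V be such that every vertex of V \ D has an even number of neighbors in K. Let u ∈ V \ D and v ∈ N_G(u) ∩ K, and set G' = λ_u(G). Then (i) every vertex of V \ D has an even number of neighbors in K in the graph G', and (ii) |N_{G'}(v) ∩ K| and |N_G(v) ∩ K| have opposite parities. -/

import Mathlib

open SimpleGraph

variable {V : Type*}

/-- Local complementation of `G` at the vertex `v`: adjacency among the
neighbors of `v` is complemented, i.e. the edge set is `E Δ K_v`. -/
def localComp (G : SimpleGraph V) (v : V) : SimpleGraph V where
  Adj u w := u ≠ w ∧ ¬ (G.Adj u w ↔ (G.Adj v u ∧ G.Adj v w))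
  symm := by
    constructor
    intro u w h
    refine ⟨h.1.symm, ?_⟩
    have h1 := G.adj_comm u w
    have h2 := h.2
    tauto
  loopless := by
    constructor
    intro u h
    exact h.1 rfl

/-- The minimal vertex degree `δ(G)` of a graph. -/
noncomputable def minDegree (G : SimpleGraph V) : ℕ :=
  sInf (Set.range fun v => (G.neighborSet v).ncard)

/-- The minimal degree under local complementation `δ_loc(G)`: the minimum of
`δ(G')` over all graphs `G'` obtainable from `G` by a finite sequence of
local complementations. -/
noncomputable def minDegreeLoc (G : SimpleGraph V) : ℕ :=
  sInf {n | ∃ l : List V, minDegree (l.foldl localComp G) = n}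

/-- `D` is an evenly seen set if every vertex outside `D` has an even number
of neighbors in `D`. -/
def EvenlySeen (G : SimpleGraph V) (D : Set V) : Prop :=
  ∀ u ∉ D, Even ((G.neighborSet u ∩ D).ncard)

/-- A nonempty set `K` is `d`-locally evenly seen if there is a set `D` with
`K ⊆ D ⊆ V` and `|D| = d` such that every vertex outside `D` has an even
number of neighbors in `K`. -/
def LocallyEvenlySeen (G : SimpleGraph V) (d : ℕ) (K : Set V) : Prop :=
  K.Nonempty ∧ ∃ D : Set V, K ⊆ D ∧ D.ncard = d ∧
    ∀ u ∉ D, Even ((G.neighborSet u ∩ K).ncard)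

/-!
For a neighbour `x` of `u`, local complementation at `u` replaces `N(x)` by
`(N(x) ∆ N(u)) \ {x}`, while every other vertex keeps its neighbourhood. Intersecting with `K`,
the parity of `|N(x) ∩ K|` therefore changes by the parity of `|N(u) ∩ K|`, which is even as
`u ∉ D`, plus one exactly when `x ∈ K` (then `x` lies in `N(u) ∩ K` but not in `N(x)`).
Vertices outside `D` are outside `K`, so they keep their parity, and `v ∈ K` flips it.
-/

open scoped symmDiff

namespace Set

variable {α : Type*} {s t : Set α}

theorem ncard_symmDiff_add_two_mul_ncard_inter (hs : s.Finite) (ht : t.Finite) :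
    (s ∆ t).ncard + 2 * (s ∩ t).ncard = s.ncard + t.ncard := by
  have hsub : s ∩ t ⊆ s ∪ t := inter_subset_left.trans subset_union_left
  have hsd : s ∆ t = (s ∪ t) \ (s ∩ t) := symmDiff_eq_sup_sdiff_inf s t
  rw [hsd, ncard_sdiff hsub (hs.inter_of_left t), ← ncard_union_add_ncard_inter s t hs ht]
  have := ncard_le_ncard hsub (hs.union ht)
  omega

theorem even_ncard_symmDiff_iff (hs : s.Finite) (ht : t.Finite) :
    Even (s ∆ t).ncard ↔ (Even s.ncard ↔ Even t.ncard) := by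
  rw [← Nat.even_add, ← ncard_symmDiff_add_two_mul_ncard_inter hs ht]
  simp [Nat.even_add]

end Set

namespace SimpleGraph

variable {G : SimpleGraph V} {u x : V}

theorem neighborSet_localComp_of_adj (hux : G.Adj u x) :
    (localComp G u).neighborSet x = (G.neighborSet x ∆ G.neighborSet u) \ {x} := by
  ext w
  simp only [mem_neighborSet, localComp, Set.mem_sdiff, Set.mem_symmDiff, Set.mem_singleton_iff]
  by_cases hwx : w = x
  · simp [hwx]
  · tauto

theorem neighborSet_localComp_of_not_adj (hux : ¬ G.Adj u x) :
    (localComp G u).neighborSet x = G.neighborSet x := by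
  ext w
  simp only [mem_neighborSet, localComp]
  have := G.ne_of_adj (a := x) (b := w)
  tauto

theorem neighborSet_localComp_inter_of_adj (hux : G.Adj u x) (K : Set V) :
    (localComp G u).neighborSet x ∩ K =
      ((G.neighborSet x ∩ K) ∆ (G.neighborSet u ∩ K)) \ {x} := by
  rw [neighborSet_localComp_of_adj hux, ← Set.inter_sdiff_right_comm,
    Set.inter_symmDiff_distrib_right]

theorem neighborSet_localComp_inter_of_adj_of_notMem {K : Set V} (hux : G.Adj u x)
    (hxK : x ∉ K) :
    (localComp G u).neighborSet x ∩ K = (G.neighborSet x ∩ K) ∆ (G.neighborSet u ∩ K) := by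
  rw [neighborSet_localComp_inter_of_adj hux, Set.sdiff_singleton_eq_self]
  exact fun hx => (Set.symmDiff_subset_union hx).elim (hxK ·.2) (hxK ·.2)

theorem even_ncard_neighborSet_localComp_inter_iff {K : Set V} (hK : K.Finite)
    (hux : G.Adj u x) (hxK : x ∈ K) :
    Even ((localComp G u).neighborSet x ∩ K).ncard ↔
      ¬(Even (G.neighborSet x ∩ K).ncard ↔ Even (G.neighborSet u ∩ K).ncard) := by
  have hxN : (G.neighborSet x ∩ K).Finite := hK.inter_of_right _
  have huN : (G.neighborSet u ∩ K).Finite := hK.inter_of_right _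
  have hx : x ∈ (G.neighborSet x ∩ K) ∆ (G.neighborSet u ∩ K) :=
    Or.inr ⟨⟨hux, hxK⟩, fun h => G.loopless.irrefl x h.1⟩
  have hpos : 1 ≤ ((G.neighborSet x ∩ K) ∆ (G.neighborSet u ∩ K)).ncard :=
    (Set.ncard_pos (hxN.symmDiff huN)).2 ⟨x, hx⟩
  rw [neighborSet_localComp_inter_of_adj hux, Set.ncard_sdiff_singleton_of_mem hx,
    Nat.even_sub hpos, ← Set.even_ncard_symmDiff_iff hxN huN]
  simp

end SimpleGraph

/-- If every vertex outside `D` sees `K ⊆ D` evenly,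
`u ∉ D` and `v ∈ N_G(u) ∩ K`, then after local complementation at `u`:
(i) every vertex outside `D` still sees `K` evenly, and
(ii) `|N_{G'}(v) ∩ K|` and `|N_G(v) ∩ K|` have opposite parities. -/
theorem statement_14 [Fintype V] (G : SimpleGraph V) (K D : Set V) (hKD : K ⊆ D)
    (hseen : ∀ x ∉ D, Even ((G.neighborSet x ∩ K).ncard))
    (u : V) (hu : u ∉ D) (v : V) (hv : v ∈ G.neighborSet u ∩ K) :
    (∀ x ∉ D, Even (((localComp G u).neighborSet x ∩ K).ncard)) ∧
      (Even (((localComp G u).neighborSet v ∩ K).ncard) ↔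
        Odd ((G.neighborSet v ∩ K).ncard)) := by
  obtain ⟨hvu, hvK⟩ := hv
  have hK : K.Finite := K.toFinite
  have hK_inter (y : V) : (G.neighborSet y ∩ K).Finite := hK.inter_of_right _
  refine ⟨fun x hx => ?_, ?_⟩
  · by_cases hux : G.Adj u x
    · rw [neighborSet_localComp_inter_of_adj_of_notMem hux (fun h => hx (hKD h)),
        Set.even_ncard_symmDiff_iff (hK_inter x) (hK_inter u)]
      exact iff_of_true (hseen x hx) (hseen u hu)
    · rw [neighborSet_localComp_of_not_adj hux]
      exact hseen x hx
  · rw [even_ncard_neighborSet_localComp_inter_iff hK hvu hvK, iff_true_right (hseen u hu),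
      Nat.not_even_iff_odd]
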